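/- Let n, f, L, d be natural numbers with 0 ≤ f < n/2 and L, d ≥ 1. Let Δ_1, …, Δ_n ∈ ℝ^d, let B ⊆ {1,…,n} with |B| = n − f, and set Δ̄ := (1/|B|)·∑_{i∈B} Δ_i. Let layer : {1,…,d} → {1,…,L} assign each coordinate to a layer, for each client i let K_i ⊆ {1,…,d}, and for each layer l let S_l ⊆ {1,…,n} satisfy |S_l| ≥ n/2 − f. Define the aggregate F ∈ ℝ^d coordinatewise by F_j := (1/|S_{layer(j)}|)·∑_{i∈S_{layer(j)}} (Δ_i|_{K_i})_j. Assume there are reals c, b ∈ [0,1], ν̄, ζ̄, C_λ, C ≥ 0 and nonnegative reals b_1, …, b_L with ∑_{l=1}^L b_l ≤ b such that: (i) ‖(Δ_i − Δ̄)|_{K_i}‖² ≤ c·‖Δ_i − Δ̄‖² for every i; (ii) ‖Δ̄|_{K_i^c ∩ layer⁻¹(l)}‖² ≤ b_l·‖Δ̄‖² for every i and every layer l; (iii) (1/|B|)·∑_{i∈B} ‖Δ_i − Δ̄‖² ≤ 2ν̄ + ζ̄; (iv) ‖Δ_i‖² ≤ C_λ² for every i ∉ B; (v) ‖Δ_i‖²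 ≤ C² for every i ∈ B. Then ‖F − Δ̄‖² ≤ 2c·(1 + f/(n−2f))·(2ν̄ + ζ̄ + 2C_λ² + 2C²) + b·C². -/

import Mathlib

/-- The masked vector `x|_K ∈ ℝ^d`: keeps the coordinates of `x` in `K` and zeroes the rest. -/
noncomputable def mask {d : ℕ} (x : EuclideanSpace ℝ (Fin d)) (K : Finset (Fin d)) :
    EuclideanSpace ℝ (Fin d) :=
  WithLp.toLp 2 (fun j => if j ∈ K then x j else 0)

/-!
Coordinatewise, the aggregate is an average over the layer's selected clients, so by Jensen its
squared deviation from `Δbar` is at most the average of the squared deviations of the sparsified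
updates. Each of those splits, along the mask `K i`, into the sparsified drift `(Δ i - Δbar)|_{K i}`
and the discarded part `Δbar|_{(K i)ᶜ}`. The drift is bounded by `c ‖Δ i - Δbar‖²` and, since every
selected set has at least `(n - 2f)/2` clients, can be summed over all clients; benign clients then
contribute `(n - f)(2ν + ζ)` and each of the `f` others at most `2(C_λ² + C²)`, because
`‖Δbar‖ ≤ C`. Grouping the discarded parts by layer gives `∑ₗ bₗ ‖Δbar‖² ≤ b C²`.
-/

open Finset

section Averages

variable {ι : Type*}

lemma one_div_card_mul_sum_le {s : Finset ι} (hs : s.Nonempty) {a : ι → ℝ} {M : ℝ}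
    (h : ∀ i ∈ s, a i ≤ M) : 1 / (#s : ℝ) * ∑ i ∈ s, a i ≤ M := by
  rw [one_div_mul_eq_div, div_le_iff₀ (Nat.cast_pos.2 hs.card_pos)]
  simpa [mul_comm] using sum_le_card_nsmul s a M h

lemma sq_one_div_card_mul_sum_sub_le {s : Finset ι} (hs : s.Nonempty) (a : ι → ℝ) (y : ℝ) :
    (1 / (#s : ℝ) * ∑ i ∈ s, a i - y) ^ 2 ≤ 1 / (#s : ℝ) * ∑ i ∈ s, (a i - y) ^ 2 := by
  have hcard : (#s : ℝ) ≠ 0 := Nat.cast_ne_zero.2 hs.card_ne_zero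
  have hcenter : 1 / (#s : ℝ) * ∑ i ∈ s, a i - y = (∑ i ∈ s, (a i - y)) / #s := by
    rw [sum_sub_distrib, sum_const, nsmul_eq_mul]
    field_simp
  rw [hcenter, one_div_mul_eq_div]
  exact sum_div_card_sq_le_sum_sq_div_card

lemma norm_one_div_card_smul_sum_sq_le {E : Type*} [SeminormedAddCommGroup E] [NormedSpace ℝ E]
    (s : Finset ι) (x : ι → E) :
    ‖(1 / (#s : ℝ)) • ∑ i ∈ s, x i‖ ^ 2 ≤ 1 / (#s : ℝ) * ∑ i ∈ s, ‖x i‖ ^ 2 := by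
  have hnorm : ‖(1 / (#s : ℝ)) • ∑ i ∈ s, x i‖ ≤ (∑ i ∈ s, ‖x i‖) / #s := by
    rw [norm_smul, Real.norm_of_nonneg (by positivity), one_div_mul_eq_div]
    gcongr
    exact norm_sum_le s x
  calc ‖(1 / (#s : ℝ)) • ∑ i ∈ s, x i‖ ^ 2 ≤ ((∑ i ∈ s, ‖x i‖) / #s) ^ 2 := by gcongr
    _ ≤ 1 / (#s : ℝ) * ∑ i ∈ s, ‖x i‖ ^ 2 := by
      rw [one_div_mul_eq_div]
      exact sum_div_card_sq_le_sum_sq_div_card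

end Averages

lemma norm_sub_sq_le_two_mul {E : Type*} [SeminormedAddCommGroup E] (x y : E) :
    ‖x - y‖ ^ 2 ≤ 2 * (‖x‖ ^ 2 + ‖y‖ ^ 2) :=
  (pow_le_pow_left₀ (norm_nonneg _) (norm_sub_le x y) 2).trans add_sq_le

lemma sum_norm_sub_sq_le {ι E : Type*} [Fintype ι] [DecidableEq ι] [SeminormedAddCommGroup E]
    (B : Finset ι) (x : ι → E) (y : E) {D M : ℝ} (hin : ∑ i ∈ B, ‖x i - y‖ ^ 2 ≤ D)
    (hout : ∀ i ∉ B, ‖x i‖ ^ 2 ≤ M) :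
    ∑ i, ‖x i - y‖ ^ 2 ≤ D + #Bᶜ * (2 * (M + ‖y‖ ^ 2)) := by
  rw [← sum_add_sum_compl B]
  refine add_le_add hin ?_
  simpa using sum_le_card_nsmul Bᶜ _ _ fun i hi =>
    (norm_sub_sq_le_two_mul (x i) y).trans (by linarith [hout i (mem_compl.1 hi)])

section Mask

variable {d : ℕ}

lemma mask_apply (x : EuclideanSpace ℝ (Fin d)) (K : Finset (Fin d)) (j : Fin d) :
    mask x K j = if j ∈ K then x j else 0 := rfl

lemma sum_sq_mask_apply (x : EuclideanSpace ℝ (Fin d)) (K T : Finset (Fin d)) :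
    ∑ j ∈ T, mask x K j ^ 2 = ‖mask x (K ∩ T)‖ ^ 2 := by
  simp only [EuclideanSpace.real_norm_sq_eq, mask_apply, ite_pow, zero_pow two_ne_zero,
    sum_ite_mem, univ_inter, inter_comm]

lemma sq_mask_sub (x y : EuclideanSpace ℝ (Fin d)) (K : Finset (Fin d)) (j : Fin d) :
    (mask x K j - y j) ^ 2 = mask (x - y) K j ^ 2 + mask y Kᶜ j ^ 2 := by
  by_cases h : j ∈ K <;> simp [mask_apply, h]

end Mask

section LayerwiseAggregation

variable {ι Λ : Type*} {d : ℕ} (Δ : ι → EuclideanSpace ℝ (Fin d)) (layer : Fin d → Λ)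
  (K : ι → Finset (Fin d)) (S : Λ → Finset ι)

lemma norm_sub_sq_le_of_layerwise_average (hS : ∀ l, (S l).Nonempty)
    {F : EuclideanSpace ℝ (Fin d)}
    (hF : ∀ j, F j = 1 / (#(S (layer j)) : ℝ) * ∑ i ∈ S (layer j), mask (Δ i) (K i) j)
    (y : EuclideanSpace ℝ (Fin d)) :
    ‖F - y‖ ^ 2 ≤
      ∑ j, 1 / (#(S (layer j)) : ℝ) * ∑ i ∈ S (layer j), mask (Δ i - y) (K i) j ^ 2 +
      ∑ j, 1 / (#(S (layer j)) : ℝ) * ∑ i ∈ S (layer j), mask y (K i)ᶜ j ^ 2 := by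
  rw [EuclideanSpace.real_norm_sq_eq, ← sum_add_distrib]
  refine sum_le_sum fun j _ => ?_
  calc (F - y) j ^ 2
      ≤ 1 / (#(S (layer j)) : ℝ) * ∑ i ∈ S (layer j), (mask (Δ i) (K i) j - y j) ^ 2 := by
        rw [PiLp.sub_apply, hF j]
        exact sq_one_div_card_mul_sum_sub_le (hS _) _ _
    _ = _ := by simp only [sq_mask_sub, sum_add_distrib, mul_add]

lemma sum_layerwise_average_sq_mask_le [Fintype ι] {r : ℝ}
    (hr : ∀ l, 1 / (#(S l) : ℝ) ≤ r) :
    ∑ j, 1 / (#(S (layer j)) : ℝ) * ∑ i ∈ S (layer j), mask (Δ i) (K i) j ^ 2 ≤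
      r * ∑ i, ‖mask (Δ i) (K i)‖ ^ 2 := by
  calc ∑ j, 1 / (#(S (layer j)) : ℝ) * ∑ i ∈ S (layer j), mask (Δ i) (K i) j ^ 2
      ≤ ∑ j, r * ∑ i, mask (Δ i) (K i) j ^ 2 := by
        refine sum_le_sum fun j _ => mul_le_mul (hr (layer j)) ?_ (by positivity)
          ((one_div_nonneg.2 (Nat.cast_nonneg _)).trans (hr (layer j)))
        exact sum_le_sum_of_subset_of_nonneg (subset_univ _) fun _ _ _ => sq_nonneg _
    _ = r * ∑ i, ‖mask (Δ i) (K i)‖ ^ 2 := by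
        simp only [← mul_sum, EuclideanSpace.real_norm_sq_eq, sum_comm (γ := ι)]

lemma sum_layerwise_average_sq_mask_compl_le [Fintype Λ] [DecidableEq Λ]
    (hS : ∀ l, (S l).Nonempty) (y : EuclideanSpace ℝ (Fin d)) (bl : Λ → ℝ)
    (hbl : ∀ i l, ‖mask y ((K i)ᶜ ∩ univ.filter (fun j => layer j = l))‖ ^ 2 ≤ bl l * ‖y‖ ^ 2) :
    ∑ j, 1 / (#(S (layer j)) : ℝ) * ∑ i ∈ S (layer j), mask y (K i)ᶜ j ^ 2 ≤
      (∑ l, bl l) * ‖y‖ ^ 2 := by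
  rw [← sum_fiberwise univ layer, sum_mul]
  refine sum_le_sum fun l _ => ?_
  calc ∑ j ∈ univ.filter (fun j => layer j = l),
        1 / (#(S (layer j)) : ℝ) * ∑ i ∈ S (layer j), mask y (K i)ᶜ j ^ 2
      = 1 / (#(S l) : ℝ) * ∑ i ∈ S l,
          ‖mask y ((K i)ᶜ ∩ univ.filter (fun j => layer j = l))‖ ^ 2 := by
        rw [sum_congr rfl fun j hj => by rw [(mem_filter.1 hj).2], ← mul_sum, sum_comm]
        simp only [sum_sq_mask_apply]
    _ ≤ bl l * ‖y‖ ^ 2 := one_div_card_mul_sum_le (hS l) fun i _ => hbl i l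

end LayerwiseAggregation

lemma two_div_sub_two_mul_mul_le {n f c X Y : ℝ} (hnf : 2 * f < n) (hc : 0 ≤ c) (hY : 0 ≤ Y) :
    2 / (n - 2 * f) * (c * ((n - f) * X + f * Y)) ≤ 2 * c * (1 + f / (n - 2 * f)) * (X + Y) := by
  have hgap : n - 2 * f ≠ 0 := by linarith
  have hsplit : 2 * c * (1 + f / (n - 2 * f)) * (X + Y) =
      2 / (n - 2 * f) * (c * ((n - f) * X + f * Y)) + 2 * c * Y := by
    field_simp
    ring
  linarith [mul_nonneg hc hY]

theorem stmt_7_general (n f L d : ℕ) (hnf : 2 * f < n)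
    (Δ : Fin n → EuclideanSpace ℝ (Fin d))
    (B : Finset (Fin n)) (hB : B.card = n - f)
    (Δbar : EuclideanSpace ℝ (Fin d))
    (hΔbar : Δbar = (1 / (B.card : ℝ)) • ∑ i ∈ B, Δ i)
    (layer : Fin d → Fin L)
    (K : Fin n → Finset (Fin d))
    (S : Fin L → Finset (Fin n)) (hS : ∀ l, ((n : ℝ) / 2 - f) ≤ (S l).card)
    (F : EuclideanSpace ℝ (Fin d))
    (hF : ∀ j, F j = (1 / ((S (layer j)).card : ℝ)) *
      ∑ i ∈ S (layer j), mask (Δ i) (K i) j)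
    (c b : ℝ) (hc0 : 0 ≤ c) (hb0 : 0 ≤ b)
    (ν ζ Clam C : ℝ)
    (bl : Fin L → ℝ) (hblsum : ∑ l, bl l ≤ b)
    (hi : ∀ i, ‖mask (Δ i - Δbar) (K i)‖ ^ 2 ≤ c * ‖Δ i - Δbar‖ ^ 2)
    (hii : ∀ (i : Fin n) (l : Fin L),
      ‖mask Δbar ((K i)ᶜ ∩ Finset.univ.filter (fun j => layer j = l))‖ ^ 2 ≤
        bl l * ‖Δbar‖ ^ 2)
    (hiii : (1 / (B.card : ℝ)) * ∑ i ∈ B, ‖Δ i - Δbar‖ ^ 2 ≤ 2 * ν + ζ)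
    (hiv : ∀ i ∉ B, ‖Δ i‖ ^ 2 ≤ Clam ^ 2)
    (hv : ∀ i ∈ B, ‖Δ i‖ ^ 2 ≤ C ^ 2) :
    ‖F - Δbar‖ ^ 2 ≤
      2 * c * (1 + (f : ℝ) / ((n : ℝ) - 2 * f)) * (2 * ν + ζ + 2 * Clam ^ 2 + 2 * C ^ 2) +
      b * C ^ 2 := by
  have hnf' : (2 * f : ℝ) < n := by exact_mod_cast hnf
  have hBcard : (#B : ℝ) = n - f := by rw [hB, Nat.cast_sub (by omega)]
  have hBne : B.Nonempty := card_pos.1 (by omega)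
  have hSpos : ∀ l, (0 : ℝ) < #(S l) := fun l => by linarith [hS l]
  have hSinv : ∀ l, 1 / (#(S l) : ℝ) ≤ 2 / (n - 2 * f) := fun l => by
    rw [div_le_div_iff₀ (hSpos l) (by linarith)]
    linarith [hS l]
  have hΔbar_sq : ‖Δbar‖ ^ 2 ≤ C ^ 2 :=
    hΔbar ▸ (norm_one_div_card_smul_sum_sq_le B Δ).trans (one_div_card_mul_sum_le hBne hv)
  have hspread : ∑ i, ‖Δ i - Δbar‖ ^ 2 ≤ (n - f) * (2 * ν + ζ) + f * (2 * (Clam ^ 2 + C ^ 2)) := by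
    have hBcompl : #Bᶜ = f := by rw [card_compl, Fintype.card_fin, hB]; omega
    have hin : ∑ i ∈ B, ‖Δ i - Δbar‖ ^ 2 ≤ (n - f) * (2 * ν + ζ) := by
      rwa [one_div_mul_eq_div, div_le_iff₀' (Nat.cast_pos.2 hBne.card_pos), hBcard] at hiii
    refine (sum_norm_sub_sq_le B Δ Δbar hin hiv).trans ?_
    rw [hBcompl]
    gcongr
  have hdrift : ∑ i, ‖mask (Δ i - Δbar) (K i)‖ ^ 2 ≤
      c * ((n - f) * (2 * ν + ζ) + f * (2 * (Clam ^ 2 + C ^ 2))) :=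
    calc ∑ i, ‖mask (Δ i - Δbar) (K i)‖ ^ 2 ≤ ∑ i, c * ‖Δ i - Δbar‖ ^ 2 :=
          sum_le_sum fun i _ => hi i
      _ = c * ∑ i, ‖Δ i - Δbar‖ ^ 2 := (mul_sum _ _ _).symm
      _ ≤ _ := mul_le_mul_of_nonneg_left hspread hc0
  have hSne : ∀ l, (S l).Nonempty := fun l => card_pos.1 (by exact_mod_cast hSpos l)
  calc ‖F - Δbar‖ ^ 2
      ≤ 2 / (n - 2 * f) * ∑ i, ‖mask (Δ i - Δbar) (K i)‖ ^ 2 + (∑ l, bl l) * ‖Δbar‖ ^ 2 :=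
        (norm_sub_sq_le_of_layerwise_average Δ layer K S hSne hF Δbar).trans <| add_le_add
          (sum_layerwise_average_sq_mask_le _ layer K S hSinv)
          (sum_layerwise_average_sq_mask_compl_le layer K S hSne Δbar bl hii)
    _ ≤ 2 / (n - 2 * f) * (c * ((n - f) * (2 * ν + ζ) + f * (2 * (Clam ^ 2 + C ^ 2)))) +
          b * C ^ 2 := by gcongr
    _ ≤ _ := by
        have := two_div_sub_two_mul_mul_le (X := 2 * ν + ζ) hnf' hc0
          (by positivity : (0 : ℝ) ≤ 2 * (Clam ^ 2 + C ^ 2))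
        linarith

/-- Deterministic core of the paper's Lemma 1 (κ-robustness of LASA).
With `n` clients of which at most `f < n/2` are malicious, benign set `B` of size `n − f`
with benign average `Δ̄`, a layer assignment `layer : {1,…,d} → {1,…,L}`, per-client
sparsification masks `K i`, per-layer selection sets `S l` of size at least `n/2 − f`,
and the layer-adaptive sparsified aggregate `F` (coordinatewise average over the layer's
selected set of the individually sparsified updates), under the bounded-sparsification
hypotheses (i)–(ii), the benign-divergence bound (iii), and the norm bounds (iv)–(v),
`‖F − Δ̄‖² ≤ 2c·(1 + f/(n−2f))·(2ν̄ + ζ̄ + 2C_λ² + 2C²) + b·C²`. -/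
theorem stmt_7 (n f L d : ℕ) (hnf : 2 * f < n) (hL : 1 ≤ L) (hd : 1 ≤ d)
    (Δ : Fin n → EuclideanSpace ℝ (Fin d))
    (B : Finset (Fin n)) (hB : B.card = n - f)
    (Δbar : EuclideanSpace ℝ (Fin d))
    (hΔbar : Δbar = (1 / (B.card : ℝ)) • ∑ i ∈ B, Δ i)
    (layer : Fin d → Fin L)
    (K : Fin n → Finset (Fin d))
    (S : Fin L → Finset (Fin n)) (hS : ∀ l, ((n : ℝ) / 2 - f) ≤ (S l).card)
    (F : EuclideanSpace ℝ (Fin d))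
    (hF : ∀ j, F j = (1 / ((S (layer j)).card : ℝ)) *
      ∑ i ∈ S (layer j), mask (Δ i) (K i) j)
    (c b : ℝ) (hc0 : 0 ≤ c) (hc1 : c ≤ 1) (hb0 : 0 ≤ b) (hb1 : b ≤ 1)
    (ν ζ Clam C : ℝ) (hν : 0 ≤ ν) (hζ : 0 ≤ ζ) (hClam : 0 ≤ Clam) (hC : 0 ≤ C)
    (bl : Fin L → ℝ) (hbl0 : ∀ l, 0 ≤ bl l) (hblsum : ∑ l, bl l ≤ b)
    (hi : ∀ i, ‖mask (Δ i - Δbar) (K i)‖ ^ 2 ≤ c * ‖Δ i - Δbar‖ ^ 2)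
    (hii : ∀ (i : Fin n) (l : Fin L),
      ‖mask Δbar ((K i)ᶜ ∩ Finset.univ.filter (fun j => layer j = l))‖ ^ 2 ≤
        bl l * ‖Δbar‖ ^ 2)
    (hiii : (1 / (B.card : ℝ)) * ∑ i ∈ B, ‖Δ i - Δbar‖ ^ 2 ≤ 2 * ν + ζ)
    (hiv : ∀ i ∉ B, ‖Δ i‖ ^ 2 ≤ Clam ^ 2)
    (hv : ∀ i ∈ B, ‖Δ i‖ ^ 2 ≤ C ^ 2) :
    ‖F - Δbar‖ ^ 2 ≤
      2 * c * (1 + (f : ℝ) / ((n : ℝ) - 2 * f)) * (2 * ν + ζ + 2 * Clam ^ 2 + 2 * C ^ 2) +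
      b * C ^ 2 :=
  stmt_7_general n f L d hnf Δ B hB Δbar hΔbar layer K S hS F hF c b hc0 hb0 ν ζ Clam C bl hblsum hi
    hii hiii hiv hv
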